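/- For $\gamma < 0$ and any $T > 0$, the Volterra equation $r(t) + \gamma(l \ast r)(t) = l(t)$ with nonnegative $l \in L_1((0,T))$ has a unique nonnegative solution $r \in L_1((0,T))$. -/

import Mathlib

open MeasureTheory Real

noncomputable def conv (f g : ℝ → ℝ) (t : ℝ) : ℝ := ∫ τ in (0:ℝ)..t, f (t - τ) * g τ

/-!
With `c = -γ ≥ 0` and a nonnegative representative of `l`, the Neumann series of the fixed-point
map `r ↦ l + c (l ∗ r)` is summed in `ℝ≥0∞`, where nonnegativity is automatic and Tonelli applies
without integrability side conditions. Since `e^{-b(t-τ)} e^{-bτ} = e^{-bt}`, multiplying by the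
weight `e^{-bt}` commutes with convolution on `(0,T)`; together with `∫ (f ∗ g) = ∫ f ∫ g` on `ℝ`
this gives `‖l ∗ r‖_b ≤ ‖l‖_b ‖r‖_b` in the weighted `L¹` norm, and `c ‖l‖_b < 1` for `b` large.
Hence the series has finite weighted norm, and the same estimate forces the difference of two
solutions, which satisfies `h = c (l ∗ h)`, to vanish.
-/

open Set Filter
open scoped ENNReal Topology

theorem lintegral_lconvolution {G : Type*} [AddGroup G] [MeasurableSpace G] [MeasurableAdd₂ G]
    [MeasurableNeg G] {μ : Measure G} [μ.IsAddLeftInvariant] [SFinite μ] {f g : G → ℝ≥0∞}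
    (hf : Measurable f) (hg : Measurable g) :
    ∫⁻ x, (f ⋆ₗ[μ] g) x ∂μ = (∫⁻ x, f x ∂μ) * ∫⁻ x, g x ∂μ := by
  simp only [lconvolution_def]
  rw [lintegral_lintegral_swap (by fun_prop), ← lintegral_mul_const _ hf]
  congr with y
  rw [lintegral_const_mul _ (by fun_prop), lintegral_add_left_eq_self]

noncomputable def causalLConv (f g : ℝ → ℝ≥0∞) (t : ℝ) : ℝ≥0∞ :=
  ∫⁻ τ in Ioo 0 t, f (t - τ) * g τ

section causalLConv

variable {f g : ℝ → ℝ≥0∞}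

theorem causalLConv_eq_lconvolution (f g : ℝ → ℝ≥0∞) :
    causalLConv f g = (Ioi 0).indicator g ⋆ₗ (Ioi 0).indicator f := by
  ext t
  rw [causalLConv, lconvolution_def, ← lintegral_indicator measurableSet_Ioo]
  congr with τ
  simp only [indicator_apply, mem_Ioo, mem_Ioi, neg_add_eq_sub, sub_pos]
  by_cases h₁ : 0 < τ <;> by_cases h₂ : τ < t <;> simp [h₁, h₂, mul_comm]

theorem measurable_causalLConv (hf : Measurable f) (hg : Measurable g) :
    Measurable (causalLConv f g) := by
  rw [causalLConv_eq_lconvolution]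
  exact measurable_lconvolution _ (hg.indicator measurableSet_Ioi) (hf.indicator measurableSet_Ioi)

theorem lintegral_causalLConv (hf : Measurable f) (hg : Measurable g) :
    ∫⁻ t, causalLConv f g t = (∫⁻ t in Ioi 0, f t) * ∫⁻ t in Ioi 0, g t := by
  rw [causalLConv_eq_lconvolution, lintegral_lconvolution (hg.indicator measurableSet_Ioi)
    (hf.indicator measurableSet_Ioi), lintegral_indicator measurableSet_Ioi,
    lintegral_indicator measurableSet_Ioi, mul_comm]

theorem causalLConv_congr {f' g' : ℝ → ℝ≥0∞} {T : ℝ} (hf : EqOn f f' (Ioo 0 T))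
    (hg : EqOn g g' (Ioo 0 T)) : EqOn (causalLConv f g) (causalLConv f' g') (Iic T) :=
  fun t ht => setLIntegral_congr_fun measurableSet_Ioo fun τ hτ => by
    rw [hf ⟨sub_pos.2 hτ.2, by linarith [hτ.1, mem_Iic.1 ht]⟩, hg ⟨hτ.1, hτ.2.trans_le ht⟩]

theorem setLIntegral_causalLConv_le (hf : Measurable f) (hg : Measurable g) (T : ℝ) :
    ∫⁻ t in Ioo 0 T, causalLConv f g t ≤ (∫⁻ t in Ioo 0 T, f t) * ∫⁻ t in Ioo 0 T, g t := by
  set s := Ioo (0 : ℝ) T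
  have hs : MeasurableSet s := measurableSet_Ioo
  calc ∫⁻ t in s, causalLConv f g t
      = ∫⁻ t in s, causalLConv (s.indicator f) (s.indicator g) t :=
        setLIntegral_congr_fun hs fun t ht =>
          causalLConv_congr (fun _ h => (indicator_of_mem h f).symm)
            (fun _ h => (indicator_of_mem h g).symm) (mem_Iic.2 ht.2.le)
    _ ≤ ∫⁻ t, causalLConv (s.indicator f) (s.indicator g) t := setLIntegral_le_lintegral _ _
    _ = (∫⁻ t in Ioi 0, s.indicator f t) * ∫⁻ t in Ioi 0, s.indicator g t :=
        lintegral_causalLConv (hf.indicator hs) (hg.indicator hs)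
    _ ≤ (∫⁻ t, s.indicator f t) * ∫⁻ t, s.indicator g t := by
        gcongr <;> exact Measure.restrict_le_self
    _ = (∫⁻ t in s, f t) * ∫⁻ t in s, g t := by rw [lintegral_indicator hs, lintegral_indicator hs]

theorem causalLConv_tsum (hf : Measurable f) {g : ℕ → ℝ → ℝ≥0∞} (hg : ∀ n, Measurable (g n))
    (t : ℝ) : causalLConv f (fun τ => ∑' n, g n τ) t = ∑' n, causalLConv f (g n) t := by
  simp only [causalLConv, ← ENNReal.tsum_mul_left]
  exact lintegral_tsum fun n => by fun_prop

end causalLConv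

noncomputable def expWeight (b t : ℝ) : ℝ≥0∞ := ENNReal.ofReal (exp (-(b * t)))

section expWeight

variable {b t T : ℝ}

@[fun_prop]
theorem measurable_expWeight (b : ℝ) : Measurable (expWeight b) := by
  unfold expWeight; fun_prop

theorem expWeight_ne_zero (b t : ℝ) : expWeight b t ≠ 0 := by
  simp [expWeight, exp_pos]

theorem expWeight_ne_top (b t : ℝ) : expWeight b t ≠ ⊤ := ENNReal.ofReal_ne_top

theorem expWeight_le_one (hb : 0 ≤ b) (ht : 0 ≤ t) : expWeight b t ≤ 1 :=
  ENNReal.ofReal_le_one.2 (exp_le_one_iff.2 (neg_nonpos.2 (mul_nonneg hb ht)))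

theorem expWeight_sub_mul (b t τ : ℝ) : expWeight b (t - τ) * expWeight b τ = expWeight b t := by
  rw [expWeight, expWeight, expWeight, ← ENNReal.ofReal_mul (exp_nonneg _), ← exp_add]
  ring_nf

theorem tendsto_expWeight_atTop (ht : 0 < t) : Tendsto (fun b => expWeight b t) atTop (𝓝 0) := by
  unfold expWeight
  simpa using ENNReal.tendsto_ofReal
    (tendsto_exp_neg_atTop_nhds_zero.comp (tendsto_id.atTop_mul_const ht))

theorem causalLConv_mul_expWeight (f g : ℝ → ℝ≥0∞) (b t : ℝ) :
    causalLConv f g t * expWeight b t =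
      causalLConv (fun s => f s * expWeight b s) (fun s => g s * expWeight b s) t := by
  rw [causalLConv, ← lintegral_mul_const' _ _ (expWeight_ne_top b t)]
  congr with τ
  rw [← expWeight_sub_mul b t τ]
  ring

variable {F G : ℝ → ℝ≥0∞}

theorem setLIntegral_mul_expWeight_le (hb : 0 ≤ b) (F : ℝ → ℝ≥0∞) (T : ℝ) :
    ∫⁻ t in Ioo 0 T, F t * expWeight b t ≤ ∫⁻ t in Ioo 0 T, F t :=
  setLIntegral_mono' measurableSet_Ioo fun _ ht =>
    mul_le_of_le_one_right' (expWeight_le_one hb ht.1.le)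

theorem setLIntegral_le_mul_expWeight (hb : 0 ≤ b) (F : ℝ → ℝ≥0∞) (T : ℝ) :
    ∫⁻ t in Ioo 0 T, F t ≤
      ENNReal.ofReal (exp (b * T)) * ∫⁻ t in Ioo 0 T, F t * expWeight b t := by
  rw [← lintegral_const_mul' _ _ ENNReal.ofReal_ne_top]
  refine setLIntegral_mono' measurableSet_Ioo fun t ht => ?_
  have hw : 1 ≤ ENNReal.ofReal (exp (b * T)) * expWeight b t := by
    rw [expWeight, ← ENNReal.ofReal_mul (exp_nonneg _), ← exp_add, ENNReal.one_le_ofReal]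
    exact one_le_exp (by nlinarith [ht.2])
  calc F t = F t * 1 := (mul_one _).symm
    _ ≤ F t * (ENNReal.ofReal (exp (b * T)) * expWeight b t) := by gcongr
    _ = _ := by ring

theorem setLIntegral_const_mul_causalLConv_mul_expWeight_le (hF : Measurable F) (hG : Measurable G)
    (c : ℝ≥0∞) (b T : ℝ) :
    ∫⁻ t in Ioo 0 T, c * causalLConv F G t * expWeight b t ≤
      c * (∫⁻ t in Ioo 0 T, F t * expWeight b t) * ∫⁻ t in Ioo 0 T, G t * expWeight b t := by
  simp_rw [mul_assoc, causalLConv_mul_expWeight]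
  rw [lintegral_const_mul _ (measurable_causalLConv (by fun_prop) (by fun_prop))]
  gcongr
  exact setLIntegral_causalLConv_le (by fun_prop) (by fun_prop) T

theorem exists_expWeight_mul_lt_one (hF : Measurable F) (hFT : ∫⁻ t in Ioo 0 T, F t ≠ ⊤)
    {c : ℝ≥0∞} (hc : c ≠ ⊤) : ∃ b, 0 ≤ b ∧ c * ∫⁻ t in Ioo 0 T, F t * expWeight b t < 1 := by
  have hlim : Tendsto (fun b => ∫⁻ t in Ioo 0 T, F t * expWeight b t) atTop (𝓝 0) := by
    simpa using tendsto_lintegral_filter_of_dominated_convergence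
      (F := fun b t => F t * expWeight b t) (f := fun _ => 0) F
      (Eventually.of_forall fun b => hF.mul (measurable_expWeight b))
      ((eventually_ge_atTop 0).mono fun b hb => (ae_restrict_mem measurableSet_Ioo).mono
        fun t ht => mul_le_of_le_one_right' (expWeight_le_one hb ht.1.le))
      hFT (by
        filter_upwards [ae_restrict_mem measurableSet_Ioo, ae_lt_top hF hFT] with t ht hFt
        simpa using ENNReal.Tendsto.const_mul (tendsto_expWeight_atTop ht.1) (Or.inr hFt.ne))
  have hclim := ENNReal.Tendsto.const_mul hlim (Or.inr hc)
  rw [mul_zero] at hclim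
  have := hclim.eventually (gt_mem_nhds zero_lt_one)
  exact (this.and (eventually_ge_atTop 0)).exists.imp fun b hb => ⟨hb.2, hb.1⟩

end expWeight

section FixedPoint

variable {F : ℝ → ℝ≥0∞} {c : ℝ≥0∞} {b T : ℝ}

theorem exists_eq_add_mul_causalLConv (hF : Measurable F)
    (hFb : ∫⁻ t in Ioo 0 T, F t * expWeight b t ≠ ⊤)
    (hq : c * ∫⁻ t in Ioo 0 T, F t * expWeight b t < 1) :
    ∃ R : ℝ → ℝ≥0∞, Measurable R ∧ (∀ t, R t = F t + c * causalLConv F R t) ∧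
      ∫⁻ t in Ioo 0 T, R t * expWeight b t ≠ ⊤ := by
  set W : (ℝ → ℝ≥0∞) → ℝ≥0∞ := fun G => ∫⁻ t in Ioo 0 T, G t * expWeight b t
  set V : (ℝ → ℝ≥0∞) → ℝ → ℝ≥0∞ := fun G t => c * causalLConv F G t
  have hV : ∀ n, Measurable (V^[n] F) := by
    intro n
    induction n with
    | zero => exact hF
    | succ n ih =>
      rw [Function.iterate_succ_apply']
      exact (measurable_causalLConv hF ih).const_mul c
  have hVW : ∀ n, W (V^[n] F) ≤ (c * W F) ^ n * W F := by
    intro n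
    induction n with
    | zero => simp
    | succ n ih =>
      rw [Function.iterate_succ_apply']
      calc W (V (V^[n] F)) ≤ c * W F * W (V^[n] F) :=
            setLIntegral_const_mul_causalLConv_mul_expWeight_le hF (hV n) c b T
        _ ≤ c * W F * ((c * W F) ^ n * W F) := by gcongr
        _ = (c * W F) ^ (n + 1) * W F := by ring
  refine ⟨fun t => ∑' n, V^[n] F t, Measurable.tsum hV, fun t => ?_, ?_⟩
  · show ∑' n, V^[n] F t = _
    rw [tsum_eq_zero_add' ENNReal.summable, Function.iterate_zero_apply]
    simp only [Function.iterate_succ_apply', V, ENNReal.tsum_mul_left, causalLConv_tsum hF hV]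
  · have hsum : W (fun t => ∑' n, V^[n] F t) ≤ (1 - c * W F)⁻¹ * W F :=
      calc W (fun t => ∑' n, V^[n] F t) = ∑' n, W (V^[n] F) := by
            simp only [W, ENNReal.tsum_mul_right.symm]
            exact lintegral_tsum fun n => by fun_prop
        _ ≤ ∑' n, (c * W F) ^ n * W F := ENNReal.tsum_le_tsum hVW
        _ = (1 - c * W F)⁻¹ * W F := by rw [ENNReal.tsum_mul_right, ENNReal.tsum_geometric]
    exact (hsum.trans_lt (ENNReal.mul_lt_top (ENNReal.inv_lt_top.2 (tsub_pos_of_lt hq))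
      hFb.lt_top)).ne

theorem ae_eq_zero_of_le_mul_causalLConv (hF : Measurable F) {H : ℝ → ℝ≥0∞} (hH : Measurable H)
    (hle : ∀ᵐ t ∂volume.restrict (Ioo 0 T), H t ≤ c * causalLConv F H t)
    (hHb : ∫⁻ t in Ioo 0 T, H t * expWeight b t ≠ ⊤)
    (hq : c * ∫⁻ t in Ioo 0 T, F t * expWeight b t < 1) :
    ∀ᵐ t ∂volume.restrict (Ioo 0 T), H t = 0 := by
  set W : (ℝ → ℝ≥0∞) → ℝ≥0∞ := fun G => ∫⁻ t in Ioo 0 T, G t * expWeight b t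
  have hWH : W H ≤ c * W F * W H :=
    calc W H ≤ ∫⁻ t in Ioo 0 T, c * causalLConv F H t * expWeight b t :=
          lintegral_mono_ae (hle.mono fun t ht => by gcongr)
      _ ≤ c * W F * W H := setLIntegral_const_mul_causalLConv_mul_expWeight_le hF hH c b T
  have hWH0 : W H = 0 := by
    by_contra h0
    have hlt : c * W F * W H < 1 * W H := (ENNReal.mul_lt_mul_iff_left h0 hHb).2 hq
    exact (hWH.trans_lt hlt).ne (one_mul _).symm
  filter_upwards [(lintegral_eq_zero_iff (hH.mul (measurable_expWeight b))).1 hWH0] with t ht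
  exact (mul_eq_zero.1 ht).resolve_right (expWeight_ne_zero b t)

end FixedPoint

section conv

variable {f f' g g' : ℝ → ℝ} {t T : ℝ}

theorem conv_eq_setIntegral (f g : ℝ → ℝ) (ht : 0 ≤ t) :
    conv f g t = ∫ τ in Ioo 0 t, f (t - τ) * g τ := by
  rw [conv, intervalIntegral.integral_of_le ht, integral_Ioc_eq_integral_Ioo]

theorem conv_congr_ae (hf : f =ᵐ[volume.restrict (Ioo 0 T)] f')
    (hg : g =ᵐ[volume.restrict (Ioo 0 T)] g') (ht : t ∈ Ioc 0 T) :
    conv f g t = conv f' g' t := by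
  rw [conv_eq_setIntegral f g ht.1.le, conv_eq_setIntegral f' g' ht.1.le]
  have hsub : Ioo 0 t ⊆ Ioo 0 T := Ioo_subset_Ioo_right ht.2
  rw [EventuallyEq, ae_restrict_iff' measurableSet_Ioo] at hf
  have hf' := (Measure.measurePreserving_sub_left volume t).quasiMeasurePreserving.ae hf
  refine integral_congr_ae ?_
  filter_upwards [ae_restrict_mem measurableSet_Ioo, ae_restrict_of_ae hf',
    ae_restrict_of_ae_restrict_of_subset hsub hg] with τ hτ hfτ hgτ
  rw [hfτ (hsub ⟨sub_pos.2 hτ.2, by linarith [hτ.1]⟩), hgτ]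

theorem enorm_conv_le (f g : ℝ → ℝ) (ht : 0 ≤ t) :
    ‖conv f g t‖ₑ ≤ causalLConv (fun x => ‖f x‖ₑ) (fun x => ‖g x‖ₑ) t := by
  rw [conv_eq_setIntegral f g ht]
  simpa only [enorm_mul, causalLConv] using
    enorm_integral_le_lintegral_enorm (fun τ => f (t - τ) * g τ)

theorem conv_toReal {R : ℝ → ℝ≥0∞} (hf : Measurable f) (hf₀ : ∀ x, 0 ≤ f x)
    (hR : Measurable R) (hRt : ∀ᵐ τ ∂volume.restrict (Ioo 0 t), R τ < ⊤) (ht : 0 ≤ t) :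
    conv f (fun τ => (R τ).toReal) t =
      (causalLConv (fun x => ENNReal.ofReal (f x)) R t).toReal := by
  rw [conv_eq_setIntegral _ _ ht, causalLConv, ← integral_toReal (by fun_prop)
    (hRt.mono fun τ hτ => ENNReal.mul_lt_top ENNReal.ofReal_lt_top hτ)]
  simp only [ENNReal.toReal_mul, ENNReal.toReal_ofReal (hf₀ _)]

theorem ae_integrableOn_mul_comp_sub (hf : Measurable f) (hg : Measurable g)
    (hfT : IntegrableOn f (Ioo 0 T)) (hgT : IntegrableOn g (Ioo 0 T)) :
    ∀ᵐ t ∂volume.restrict (Ioo 0 T), IntegrableOn (fun τ => f (t - τ) * g τ) (Ioo 0 t) := by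
  have hfin : ∫⁻ t in Ioo 0 T, causalLConv (fun x => ‖f x‖ₑ) (fun x => ‖g x‖ₑ) t ≠ ⊤ :=
    ((setLIntegral_causalLConv_le hf.enorm hg.enorm T).trans_lt
      (ENNReal.mul_lt_top hfT.2 hgT.2)).ne
  filter_upwards [ae_lt_top (measurable_causalLConv hf.enorm hg.enorm) hfin] with t ht
  refine ⟨by fun_prop, ?_⟩
  simpa only [HasFiniteIntegral, enorm_mul, causalLConv] using ht

theorem ae_conv_sub {g₁ g₂ : ℝ → ℝ} (hf : Measurable f) (hg₁ : Measurable g₁)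
    (hg₂ : Measurable g₂) (hfT : IntegrableOn f (Ioo 0 T)) (hg₁T : IntegrableOn g₁ (Ioo 0 T))
    (hg₂T : IntegrableOn g₂ (Ioo 0 T)) :
    ∀ᵐ t ∂volume.restrict (Ioo 0 T), conv f (g₁ - g₂) t = conv f g₁ t - conv f g₂ t := by
  filter_upwards [ae_integrableOn_mul_comp_sub hf hg₁ hfT hg₁T,
    ae_integrableOn_mul_comp_sub hf hg₂ hfT hg₂T, ae_restrict_mem measurableSet_Ioo]
    with t h₁ h₂ ht
  simp only [conv_eq_setIntegral _ _ ht.1.le, Pi.sub_apply, mul_sub]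
  exact integral_sub h₁ h₂

end conv

section Volterra

variable {γ T : ℝ} {l : ℝ → ℝ}

theorem ae_add_mul_conv_eq_congr {l' r r' : ℝ → ℝ} (hl : l =ᵐ[volume.restrict (Ioo 0 T)] l')
    (hr : r =ᵐ[volume.restrict (Ioo 0 T)] r')
    (h : ∀ᵐ t ∂volume.restrict (Ioo 0 T), r t + γ * conv l r t = l t) :
    ∀ᵐ t ∂volume.restrict (Ioo 0 T), r' t + γ * conv l' r' t = l' t := by
  filter_upwards [h, hl, hr, ae_restrict_mem measurableSet_Ioo] with t ht hlt hrt htI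
  rw [← hlt, ← hrt, ← conv_congr_ae hl hr (Ioo_subset_Ioc_self htI), ht]

theorem ae_eq_zero_of_eq_mul_conv {L h : ℝ → ℝ} (hL : Measurable L) (hh : Measurable h)
    (hLT : IntegrableOn L (Ioo 0 T)) (hhT : IntegrableOn h (Ioo 0 T)) (c : ℝ)
    (heq : ∀ᵐ t ∂volume.restrict (Ioo 0 T), h t = c * conv L h t) :
    h =ᵐ[volume.restrict (Ioo 0 T)] 0 := by
  obtain ⟨b, hb, hq⟩ :=
    exists_expWeight_mul_lt_one (c := ‖c‖ₑ) hL.enorm (ne_of_lt hLT.2) enorm_ne_top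
  have hle : ∀ᵐ t ∂volume.restrict (Ioo 0 T),
      ‖h t‖ₑ ≤ ‖c‖ₑ * causalLConv (fun x => ‖L x‖ₑ) (fun x => ‖h x‖ₑ) t := by
    filter_upwards [heq, ae_restrict_mem measurableSet_Ioo] with t ht htI
    rw [ht, enorm_mul]
    exact mul_le_mul_right (enorm_conv_le L h htI.1.le) _
  filter_upwards [ae_eq_zero_of_le_mul_causalLConv hL.enorm hh.enorm hle
    ((setLIntegral_mul_expWeight_le hb _ T).trans_lt hhT.2).ne hq] with t ht
  simpa using ht

theorem ae_eq_of_add_mul_conv_eq {r₁ r₂ : ℝ → ℝ} (hl : IntegrableOn l (Ioo 0 T))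
    (hr₁ : IntegrableOn r₁ (Ioo 0 T)) (hr₂ : IntegrableOn r₂ (Ioo 0 T))
    (h₁ : ∀ᵐ t ∂volume.restrict (Ioo 0 T), r₁ t + γ * conv l r₁ t = l t)
    (h₂ : ∀ᵐ t ∂volume.restrict (Ioo 0 T), r₂ t + γ * conv l r₂ t = l t) :
    r₁ =ᵐ[volume.restrict (Ioo 0 T)] r₂ := by
  have hL := hl.aestronglyMeasurable
  have hg₁ := hr₁.aestronglyMeasurable
  have hg₂ := hr₂.aestronglyMeasurable
  have hdiff : ∀ᵐ t ∂volume.restrict (Ioo 0 T),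
      (hg₁.mk r₁ - hg₂.mk r₂) t = -γ * conv (hL.mk l) (hg₁.mk r₁ - hg₂.mk r₂) t := by
    filter_upwards [ae_add_mul_conv_eq_congr hL.ae_eq_mk hg₁.ae_eq_mk h₁,
      ae_add_mul_conv_eq_congr hL.ae_eq_mk hg₂.ae_eq_mk h₂,
      ae_conv_sub hL.measurable_mk hg₁.measurable_mk hg₂.measurable_mk
        (hl.congr hL.ae_eq_mk) (hr₁.congr hg₁.ae_eq_mk) (hr₂.congr hg₂.ae_eq_mk)] with t e₁ e₂ e
    rw [Pi.sub_apply, e]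
    linarith
  filter_upwards [hg₁.ae_eq_mk, hg₂.ae_eq_mk, ae_eq_zero_of_eq_mul_conv hL.measurable_mk
    (hg₁.measurable_mk.sub hg₂.measurable_mk) (hl.congr hL.ae_eq_mk)
    ((hr₁.congr hg₁.ae_eq_mk).sub (hr₂.congr hg₂.ae_eq_mk)) (-γ) hdiff] with t e₁ e₂ e
  rw [e₁, e₂]
  exact sub_eq_zero.1 e

theorem exists_nonneg_add_mul_conv_eq (hγ : γ ≤ 0) (hl : IntegrableOn l (Ioo 0 T))
    (hl₀ : ∀ᵐ t ∂volume.restrict (Ioo 0 T), 0 ≤ l t) :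
    ∃ r : ℝ → ℝ, IntegrableOn r (Ioo 0 T) ∧ (∀ t, 0 ≤ r t) ∧
      ∀ᵐ t ∂volume.restrict (Ioo 0 T), r t + γ * conv l r t = l t := by
  obtain ⟨L, hL, hL₀, hlL⟩ : ∃ L : ℝ → ℝ, Measurable L ∧ (∀ x, 0 ≤ L x) ∧
      l =ᵐ[volume.restrict (Ioo 0 T)] L := by
    have hm := hl.aestronglyMeasurable
    refine ⟨fun x => max (hm.mk l x) 0, hm.measurable_mk.max measurable_const,
      fun x => le_max_right _ _, ?_⟩
    filter_upwards [hm.ae_eq_mk, hl₀] with x h₁ h₂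
    rw [← h₁, max_eq_left h₂]
  set F : ℝ → ℝ≥0∞ := fun x => ENNReal.ofReal (L x)
  have hF : Measurable F := hL.ennreal_ofReal
  have hFT : ∫⁻ t in Ioo 0 T, F t ≠ ⊤ := (hl.congr hlL).lintegral_lt_top.ne
  obtain ⟨b, hb, hq⟩ :=
    exists_expWeight_mul_lt_one (c := ENNReal.ofReal (-γ)) hF hFT ENNReal.ofReal_ne_top
  obtain ⟨R, hR, hRF, hRb⟩ := exists_eq_add_mul_causalLConv hF
    ((setLIntegral_mul_expWeight_le hb F T).trans_lt hFT.lt_top).ne hq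
  have hRT : ∫⁻ t in Ioo 0 T, R t ≠ ⊤ := ((setLIntegral_le_mul_expWeight hb R T).trans_lt
    (ENNReal.mul_lt_top ENNReal.ofReal_lt_top hRb.lt_top)).ne
  have hRfin := ae_lt_top hR hRT
  refine ⟨fun t => (R t).toReal, integrable_toReal_of_lintegral_ne_top hR.aemeasurable hRT,
    fun t => ENNReal.toReal_nonneg, ae_add_mul_conv_eq_congr hlL.symm (ae_eq_refl _) ?_⟩
  filter_upwards [hRfin, ae_restrict_mem measurableSet_Ioo] with t hRt ht
  have hconv := conv_toReal hL hL₀ hR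
    (ae_restrict_of_ae_restrict_of_subset (Ioo_subset_Ioo_right ht.2.le) hRfin) ht.1.le
  have hsum := hRF t
  have hne := ENNReal.add_ne_top.1 (hsum ▸ hRt.ne)
  rw [hsum, ENNReal.toReal_add hne.1 hne.2, ENNReal.toReal_mul, ENNReal.toReal_ofReal (hL₀ t),
    ENNReal.toReal_ofReal (by linarith), ← hconv]
  ring

end Volterra

theorem volterra_negative_gamma_existence_uniqueness_general
    (γ : ℝ) (hγ : γ < 0) (T : ℝ) (l : ℝ → ℝ)
    (hl : IntegrableOn l (Set.Ioo 0 T))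
    (hlnn : ∀ᵐ t ∂(volume.restrict (Set.Ioo (0:ℝ) T)), 0 ≤ l t) :
    ∃ r : ℝ → ℝ, IntegrableOn r (Set.Ioo 0 T) ∧
      (∀ᵐ t ∂(volume.restrict (Set.Ioo (0:ℝ) T)), 0 ≤ r t) ∧
      (∀ᵐ t ∂(volume.restrict (Set.Ioo (0:ℝ) T)), r t + γ * conv l r t = l t) ∧
      (∀ r' : ℝ → ℝ, IntegrableOn r' (Set.Ioo 0 T) →
        (∀ᵐ t ∂(volume.restrict (Set.Ioo (0:ℝ) T)), r' t + γ * conv l r' t = l t) →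
        (∀ᵐ t ∂(volume.restrict (Set.Ioo (0:ℝ) T)), r' t = r t)) := by
  obtain ⟨r, hr, hr₀, hrl⟩ := exists_nonneg_add_mul_conv_eq hγ.le hl hlnn
  exact ⟨r, hr, ae_of_all _ hr₀, hrl,
    fun r' hr' hr'l => ae_eq_of_add_mul_conv_eq hl hr' hr hr'l hrl⟩

/-- For `γ < 0` the Volterra equation `r + γ (l ∗ r) = l` with nonnegative
`l ∈ L¹((0,T))` has a unique (up to a.e. equality) nonnegative solution in `L¹((0,T))`. -/
theorem volterra_negative_gamma_existence_uniqueness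
    (γ : ℝ) (hγ : γ < 0) (T : ℝ) (hT : 0 < T) (l : ℝ → ℝ)
    (hl : IntegrableOn l (Set.Ioo 0 T))
    (hlnn : ∀ᵐ t ∂(volume.restrict (Set.Ioo (0:ℝ) T)), 0 ≤ l t) :
    ∃ r : ℝ → ℝ, IntegrableOn r (Set.Ioo 0 T) ∧
      (∀ᵐ t ∂(volume.restrict (Set.Ioo (0:ℝ) T)), 0 ≤ r t) ∧
      (∀ᵐ t ∂(volume.restrict (Set.Ioo (0:ℝ) T)), r t + γ * conv l r t = l t) ∧
      (∀ r' : ℝ → ℝ, IntegrableOn r' (Set.Ioo 0 T) →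
        (∀ᵐ t ∂(volume.restrict (Set.Ioo (0:ℝ) T)), r' t + γ * conv l r' t = l t) →
        (∀ᵐ t ∂(volume.restrict (Set.Ioo (0:ℝ) T)), r' t = r t)) :=
  volterra_negative_gamma_existence_uniqueness_general γ hγ T l hl hlnn
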